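/- arXiv:1402.5385 — 2 statements merged into one kernel-verified Lean document; each statement's English description precedes it below -/
import Mathlib

section
/- Let k be an algebraically closed field of characteristic zero and let V' be a 3-dimensional k-vector space. The image of the map μ : Hom(V', V) → S²(V'^*) × 𝔸¹ given (in matrix terms, identifying Hom(V', V) with 3×3 matrices) by Q ↦ (Qᵀ·Q, det(Q)) is exactly the set {(S, x) : S symmetric 3×3 matrix, det(S) = x²}. -/
/-!
A symmetric bilinear form admits an orthogonal basis once `2` is invertible, so every symmetric
matrix is congruent to a diagonal one, `S = Pᵀ D P`; over an algebraically closed field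
`D = CᵀC` with `C` a diagonal of square roots, hence `S = QᵀQ` for `Q = CP`. Then
`(det Q)² = det S = x²`, so `det Q = ±x`, and the wrong sign is corrected by replacing `Q` with
`EQ` for a diagonal sign matrix `E` with `EᵀE = 1` and `det E = -1`.
-/

open Matrix

namespace LinearMap.BilinForm

variable {k M n : Type*} [Field k] [AddCommGroup M] [Module k M] [Fintype n] [DecidableEq n]

theorem toMatrix_eq_diagonal_of_isOrthoᵢ {B : LinearMap.BilinForm k M} {v : Module.Basis n k M}
    (hv : B.IsOrthoᵢ v) : toMatrix v B = diagonal fun i => B (v i) (v i) := by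
  ext i j
  rcases eq_or_ne i j with rfl | hij
  · simp [toMatrix_apply]
  · simp [toMatrix_apply, diagonal_apply_ne _ hij, hv hij]

end LinearMap.BilinForm

namespace Matrix

variable {n k : Type*} [Fintype n] [DecidableEq n] [Field k]

theorem IsSymm.exists_eq_transpose_mul_diagonal_mul [Invertible (2 : k)] {S : Matrix n n k}
    (hS : S.IsSymm) : ∃ (P : Matrix n n k) (d : n → k), S = Pᵀ * diagonal d * P := by
  obtain ⟨v₀, hv₀⟩ := LinearMap.BilinForm.exists_orthogonal_basis
    (LinearMap.BilinForm.isSymm_iff.mp (isSymm_toBilin'_iff_isSymm.mpr hS))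
  let e := (finCongr (Module.finrank_fintype_fun_eq_card k)).trans (Fintype.equivFin n).symm
  set v := v₀.reindex e with hv_def
  have hv : S.toBilin'.IsOrthoᵢ v := by
    rw [hv_def, Module.Basis.coe_reindex]
    exact fun i j hij => hv₀ (e.symm.injective.ne hij)
  refine ⟨v.toMatrix (Pi.basisFun k n), fun i => S.toBilin' (v i) (v i), ?_⟩
  rw [← LinearMap.BilinForm.toMatrix_eq_diagonal_of_isOrthoᵢ hv,
    LinearMap.BilinForm.toMatrix_mul_basis_toMatrix, LinearMap.BilinForm.toMatrix_basisFun,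
    LinearMap.BilinForm.toMatrix'_toBilin']

theorem IsSymm.exists_transpose_mul_self_eq [IsAlgClosed k] [Invertible (2 : k)]
    {S : Matrix n n k} (hS : S.IsSymm) : ∃ Q : Matrix n n k, Qᵀ * Q = S := by
  obtain ⟨P, d, rfl⟩ := hS.exists_eq_transpose_mul_diagonal_mul
  choose c hc using fun i => IsAlgClosed.exists_pow_nat_eq (d i) two_pos
  refine ⟨diagonal c * P, ?_⟩
  rw [transpose_mul, diagonal_transpose, Matrix.mul_assoc, ← Matrix.mul_assoc (diagonal c),
    diagonal_mul_diagonal, ← Matrix.mul_assoc]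
  simp_rw [← sq, hc]

theorem exists_transpose_mul_self_eq_one_and_det_eq_neg_one [Nonempty n] :
    ∃ E : Matrix n n k, Eᵀ * E = 1 ∧ E.det = -1 := by
  obtain ⟨i⟩ := ‹Nonempty n›
  refine ⟨diagonal (Function.update 1 i (-1)), ?_, ?_⟩
  · rw [diagonal_transpose, diagonal_mul_diagonal, ← diagonal_one]
    congr 1
    ext j
    rcases eq_or_ne j i with rfl | hj
    · simp
    · simp [hj]
  · simp [det_diagonal, Finset.prod_update_of_mem]

theorem IsSymm.exists_transpose_mul_self_eq_and_det_eq [IsAlgClosed k] [Invertible (2 : k)]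
    [Nonempty n] {S : Matrix n n k} (hS : S.IsSymm) {x : k} (hx : S.det = x ^ 2) :
    ∃ Q : Matrix n n k, Qᵀ * Q = S ∧ Q.det = x := by
  obtain ⟨Q, rfl⟩ := hS.exists_transpose_mul_self_eq
  have hsq : Q.det ^ 2 = x ^ 2 := by rw [← hx, det_mul, det_transpose, sq]
  rcases sq_eq_sq_iff_eq_or_eq_neg.mp hsq with h | h
  · exact ⟨Q, rfl, h⟩
  · obtain ⟨E, hE, hEdet⟩ := exists_transpose_mul_self_eq_one_and_det_eq_neg_one (n := n) (k := k)
    refine ⟨E * Q, ?_, ?_⟩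
    · rw [transpose_mul, Matrix.mul_assoc, ← Matrix.mul_assoc Eᵀ, hE, Matrix.one_mul]
    · rw [det_mul, hEdet, h, neg_one_mul, neg_neg]

end Matrix

/-- **Image of `Q ↦ (QᵀQ, det Q)`.**
Over an algebraically closed field of characteristic zero, the image of the map
`μ : Q ↦ (Qᵀ·Q, det Q)` on `3×3` matrices is exactly
`{(S, x) : S symmetric, det S = x²}`. -/
theorem range_transposeMulSelf_det
    {k : Type*} [Field k] [IsAlgClosed k] [CharZero k] :
    Set.range (fun Q : Matrix (Fin 3) (Fin 3) k => (Qᵀ * Q, Q.det))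
      = {p : Matrix (Fin 3) (Fin 3) k × k | p.1.IsSymm ∧ p.1.det = p.2 ^ 2} := by
  refine Set.Subset.antisymm (Set.range_subset_iff.2 fun Q => ?_) ?_
  · exact ⟨isSymm_transpose_mul_self Q, by rw [det_mul, det_transpose, sq]⟩
  · rintro ⟨S, x⟩ ⟨hS, hx⟩
    obtain ⟨Q, hQ, hdet⟩ := hS.exists_transpose_mul_self_eq_and_det_eq hx
    exact ⟨Q, Prod.ext hQ hdet⟩
end

section
/- In the polynomial ring k[t₁, …, t₁₂] over a field k, the ideal K generated by the six elements t₂t₃ − t₂t₅ − t₂t₈t₁₁, t₁t₃ − t₁t₅ − t₁t₈t₁₁, t₂t₆, t₁t₆, t₂t₄, t₁t₄ equals the intersection of the two ideals C₁ = (t₄, t₆, t₈t₁₁ − t₃ + t₅) and C₂ = (t₁, t₂). -/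
/-!
The six generators of `K` are, up to sign, the products of the generators of `C₂ = (t₁, t₂)`
with those of `C₁`, so `K = C₂ C₁`, and it remains to show `C₁ ∩ C₂ ⊆ C₁ C₂`. The substitution
`t₃ ↦ t₈t₁₁ + t₅`, `t₄, t₆ ↦ 0` is an endomorphism `φ` of `k[t₁, …, t₁₂]` that kills `C₁` and
satisfies `f ≡ φ f (mod C₁)`, while fixing `t₁` and `t₂`. If `f = a t₁ + b t₂` lies in `C₁`, then
`0 = φ f = φ(a) t₁ + φ(b) t₂`, hence `f = (a - φ a) t₁ + (b - φ b) t₂ ∈ C₁ C₂`.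
-/

open MvPolynomial

namespace Ideal

variable {R : Type*} [CommRing R]

theorem inf_span_eq_mul_of_retraction {I : Ideal R} (φ : R →+* R) (hI : I ≤ RingHom.ker φ)
    (hφ : ∀ x, x - φ x ∈ I) {S : Set R} (hS : ∀ s ∈ S, φ s = s) :
    I ⊓ span S = I * span S := by
  refine le_antisymm (fun f hf => ?_) mul_le_inf
  have sub_mem : ∀ g ∈ span S, g - φ g ∈ I * span S := by
    intro g hg
    induction hg using Submodule.span_induction with
    | mem s hs => simp [hS s hs]
    | zero => simp
    | add x y _ _ hx hy => simpa [add_sub_add_comm] using add_mem hx hy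
    | smul r x hx ihx =>
      have : r * x - φ (r * x) = (r - φ r) * x + φ r * (x - φ x) := by rw [map_mul]; ring
      rw [smul_eq_mul, this]
      exact add_mem (mul_mem_mul (hφ r) hx) (mul_mem_left _ _ ihx)
  simpa [RingHom.mem_ker.mp (hI (mem_inf.mp hf).1)] using sub_mem f (mem_inf.mp hf).2

end Ideal

theorem MvPolynomial.sub_aeval_mem {σ R : Type*} [CommRing R] (I : Ideal (MvPolynomial σ R))
    (f : σ → MvPolynomial σ R) (hf : ∀ i, X i - f i ∈ I) (p : MvPolynomial σ R) :
    p - aeval f p ∈ I := by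
  have : (Ideal.Quotient.mkₐ R I).comp (aeval f) = Ideal.Quotient.mkₐ R I :=
    algHom_ext fun i => by simpa using (Ideal.Quotient.eq.mpr (hf i)).symm
  exact Ideal.Quotient.eq.mp (DFunLike.congr_fun this p).symm

theorem span_gl3_eq_mul {k : Type*} [CommRing k] :
    Ideal.span ({X 1 * X 2 - X 1 * X 4 - X 1 * X 7 * X 10,
                 X 0 * X 2 - X 0 * X 4 - X 0 * X 7 * X 10,
                 X 1 * X 5, X 0 * X 5,
                 X 1 * X 3, X 0 * X 3} : Set (MvPolynomial (Fin 12) k))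
      = Ideal.span ({X 0, X 1} : Set (MvPolynomial (Fin 12) k))
        * Ideal.span ({X 3, X 5, X 7 * X 10 - X 2 + X 4} : Set (MvPolynomial (Fin 12) k)) := by
  have eq_neg_mul (i : Fin 12) : X i * X 2 - X i * X 4 - X i * X 7 * X 10 =
      -(X i * (X 7 * X 10 - X 2 + X 4) : MvPolynomial (Fin 12) k) := by ring
  rw [Ideal.span_mul_span']
  apply le_antisymm <;> rw [Ideal.span_le]
  · simp only [Set.insert_subset_iff, Set.singleton_subset_iff, SetLike.mem_coe, eq_neg_mul]
    refine ⟨neg_mem ?_, neg_mem ?_, ?_, ?_, ?_, ?_⟩ <;>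
      exact Ideal.subset_span (Set.mul_mem_mul (by simp) (by simp))
  · rintro _ ⟨a, ha, b, hb, rfl⟩
    simp only [Set.mem_insert_iff, Set.mem_singleton_iff] at ha hb
    rcases hb with rfl | rfl | rfl
    · rcases ha with rfl | rfl <;> exact Ideal.subset_span (by simp)
    · rcases ha with rfl | rfl <;> exact Ideal.subset_span (by simp)
    · rcases ha with rfl | rfl <;> rw [SetLike.mem_coe, ← neg_mem_iff, ← eq_neg_mul] <;>
        exact Ideal.subset_span (by simp)

/-- **Decomposition of the ideal `K` in `k[t₁,…,t₁₂]` for the `GL₃` example.**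
The ideal `K` generated by
`t₂t₃ − t₂t₅ − t₂t₈t₁₁, t₁t₃ − t₁t₅ − t₁t₈t₁₁, t₂t₆, t₁t₆, t₂t₄, t₁t₄`
equals the intersection of `C₁ = (t₄, t₆, t₈t₁₁ − t₃ + t₅)` and `C₂ = (t₁, t₂)`.
(Variables: `tᵢ = X (i-1)`.) -/
theorem ideal_decomposition_GL3
    {k : Type*} [Field k] :
    Ideal.span ({X 1 * X 2 - X 1 * X 4 - X 1 * X 7 * X 10,
                 X 0 * X 2 - X 0 * X 4 - X 0 * X 7 * X 10,
                 X 1 * X 5, X 0 * X 5,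
                 X 1 * X 3, X 0 * X 3} : Set (MvPolynomial (Fin 12) k))
      = Ideal.span ({X 3, X 5, X 7 * X 10 - X 2 + X 4} : Set (MvPolynomial (Fin 12) k))
        ⊓ Ideal.span ({X 0, X 1} : Set (MvPolynomial (Fin 12) k)) := by
  set C₁ := Ideal.span ({X 3, X 5, X 7 * X 10 - X 2 + X 4} : Set (MvPolynomial (Fin 12) k))
  let v : Fin 12 → MvPolynomial (Fin 12) k :=
    ![X 0, X 1, X 7 * X 10 + X 4, 0, X 4, 0, X 6, X 7, X 8, X 9, X 10, X 11]
  have le_ker_aeval : C₁ ≤ RingHom.ker (aeval v) := by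
    rw [Ideal.span_le]
    simp [Set.insert_subset_iff, v]
  have X_sub_mem (i : Fin 12) : X i - v i ∈ C₁ := by
    fin_cases i <;>
      simp only [v, Fin.zero_eta, Fin.mk_one, Fin.reduceFinMk, Fin.isValue, Matrix.cons_val,
        Matrix.cons_val_zero, Matrix.cons_val_one, sub_self, sub_zero, zero_mem]
    · rw [← neg_mem_iff, show -(X 2 - (X 7 * X 10 + X 4)) =
        (X 7 * X 10 - X 2 + X 4 : MvPolynomial (Fin 12) k) by ring]
      exact Ideal.subset_span (by simp)
    all_goals exact Ideal.subset_span (by simp)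
  rw [span_gl3_eq_mul, mul_comm]
  exact (Ideal.inf_span_eq_mul_of_retraction (aeval v).toRingHom le_ker_aeval
    (sub_aeval_mem C₁ v X_sub_mem) (by simp [v])).symm
end
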